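/- For s ∈ C²(ω, ℝ²) and B ∈ C¹(ω, ℝ^{2×2}_sym), the symmetric matrix fields arising in Theorem 1.8(i) satisfy det(B − 2 sym ∇s) + (1/2)curl^T curl(s ⊗ s) = 3 det ∇s − ⟨∇(curl s), s^⊥⟩ − 2⟨cof B : ∇s⟩ + det B pointwise in ω. -/

import Mathlib

open MeasureTheory Filter Matrix

attribute [local instance] Matrix.frobeniusNormedAddCommGroup Matrix.frobeniusNormedSpace

noncomputable section

abbrev R2 := ℝ × ℝ
abbrev M2 := Matrix (Fin 2) (Fin 2) ℝ

/-- classical partial derivative in coordinate direction `i`. -/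
def pd (i : Fin 2) (f : R2 → ℝ) (x : R2) : ℝ :=
  fderiv ℝ f x (if i = 0 then ((1:ℝ), (0:ℝ)) else ((0:ℝ), (1:ℝ)))

/-- smooth test function compactly supported in ω. -/
def IsTest (ω : Set R2) (α : R2 → ℝ) : Prop :=
  ContDiff ℝ (⊤ : ℕ∞) α ∧ HasCompactSupport α ∧ tsupport α ⊆ ω

def μr (ω : Set R2) : Measure R2 := volume.restrict ω

def MemL2 {E : Type*} [NormedAddCommGroup E] (ω : Set R2) (f : R2 → E) : Prop :=
  MemLp f 2 (μr ω)

def l2norm {E : Type*} [NormedAddCommGroup E] (ω : Set R2) (f : R2 → E) : ℝ :=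
  (eLpNorm f 2 (μr ω)).toReal

def HasWeakPD (ω : Set R2) (i : Fin 2) (f g : R2 → ℝ) : Prop :=
  ∀ α : R2 → ℝ, IsTest ω α →
    ∫ x in ω, f x * pd i α x = - ∫ x in ω, g x * α x

def sym2 (M : M2) : M2 := (2⁻¹ : ℝ) • (M + Mᵀ)

def cof2 (M : M2) : M2 := !![M 1 1, -(M 0 1); -(M 1 0), M 0 0]

def frob (A B : M2) : ℝ := ∑ i, ∑ j, A i j * B i j

def gradC (f : R2 → ℝ) (x : R2) : R2 := (pd 0 f x, pd 1 f x)

def hessC (f : R2 → ℝ) (x : R2) : M2 :=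
  !![pd 0 (pd 0 f) x, pd 0 (pd 1 f) x; pd 1 (pd 0 f) x, pd 1 (pd 1 f) x]

def jacC (ψ : R2 → R2) (x : R2) : M2 :=
  !![pd 0 (fun y => (ψ y).1) x, pd 1 (fun y => (ψ y).1) x;
     pd 0 (fun y => (ψ y).2) x, pd 1 (fun y => (ψ y).2) x]

def MemW12 (ω : Set R2) (f : R2 → ℝ) (g : R2 → R2) : Prop :=
  MemL2 ω f ∧ MemL2 ω g ∧ HasWeakPD ω 0 f (fun x => (g x).1) ∧
    HasWeakPD ω 1 f (fun x => (g x).2)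

/-- vector-valued `W^{1,2}` field `w` with weak Jacobian `G` (rows = gradients). -/
def MemW12v (ω : Set R2) (w : R2 → R2) (G : R2 → M2) : Prop :=
  MemL2 ω w ∧ MemL2 ω G ∧
    HasWeakPD ω 0 (fun x => (w x).1) (fun x => G x 0 0) ∧
    HasWeakPD ω 1 (fun x => (w x).1) (fun x => G x 0 1) ∧
    HasWeakPD ω 0 (fun x => (w x).2) (fun x => G x 1 0) ∧
    HasWeakPD ω 1 (fun x => (w x).2) (fun x => G x 1 1)

def HasWeakHess (ω : Set R2) (f : R2 → ℝ) (H : R2 → M2) : Prop :=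
  ∀ α : R2 → ℝ, IsTest ω α → ∀ i j : Fin 2,
    ∫ x in ω, f x * pd i (pd j α) x = ∫ x in ω, H x i j * α x

def MemW22 (ω : Set R2) (f : R2 → ℝ) (g : R2 → R2) (H : R2 → M2) : Prop :=
  MemW12 ω f g ∧ MemL2 ω H ∧ HasWeakHess ω f H

/-- `φ ∈ W^{1,2}_0(ω,ℝ²)`: member of `W^{1,2}` approximable by smooth compactly
supported fields in the `W^{1,2}` norm. -/
def MemW12_0v (ω : Set R2) (φ : R2 → R2) (G : R2 → M2) : Prop :=
  MemW12v ω φ G ∧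
  ∃ ψ : ℕ → R2 → R2,
    (∀ n, ContDiff ℝ (⊤ : ℕ∞) (ψ n) ∧ HasCompactSupport (ψ n) ∧ tsupport (ψ n) ⊆ ω) ∧
    Tendsto (fun n => l2norm ω (fun x => φ x - ψ n x)
        + l2norm ω (fun x => G x - jacC (ψ n) x)) atTop (nhds 0)

/-- `r ∈ W^{2,2}_0(ω)`: member of `W^{2,2}` approximable by test functions in `W^{2,2}`. -/
def MemW22_0 (ω : Set R2) (r : R2 → ℝ) (g : R2 → R2) (H : R2 → M2) : Prop :=
  MemW22 ω r g H ∧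
  ∃ ψ : ℕ → R2 → ℝ, (∀ n, IsTest ω (ψ n)) ∧
    Tendsto (fun n => l2norm ω (fun x => r x - ψ n x)
      + l2norm ω (fun x => g x - gradC (ψ n) x)
      + l2norm ω (fun x => H x - hessC (ψ n) x)) atTop (nhds 0)

def gradNormSq (ω : Set R2) (α : R2 → ℝ) : ℝ := ∫ x in ω, ((pd 0 α x)^2 + (pd 1 α x)^2)

def hessNormSq (ω : Set R2) (α : R2 → ℝ) : ℝ := ∫ x in ω, frob (hessC α x) (hessC α x)

/-- `H^{-1}(ω)` norm of the (distributional) row-wise curl of a matrix field. -/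
def curlHneg1 (ω : Set R2) (F : R2 → M2) : ℝ :=
  sSup { r | ∃ α : Fin 2 → R2 → ℝ, (∀ i, IsTest ω (α i)) ∧
    (∑ i, gradNormSq ω (α i)) ≤ 1 ∧
    r = ∑ i, ∫ x in ω, (F x i 0 * pd 1 (α i) x - F x i 1 * pd 0 (α i) x) }

/-- `H^{-2}(ω)` norm of the distribution `curlᵀ curl F`. -/
def ctcHneg2 (ω : Set R2) (F : R2 → M2) : ℝ :=
  sSup { r | ∃ α : R2 → ℝ, IsTest ω α ∧ hessNormSq ω α ≤ 1 ∧
    r = ∫ x in ω, frob (F x) (cof2 (hessC α x)) }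

/-- `H^{-2}(ω)` norm of a locally integrable function. -/
def funcHneg2 (ω : Set R2) (f : R2 → ℝ) : ℝ :=
  sSup { r | ∃ α : R2 → ℝ, IsTest ω α ∧ hessNormSq ω α ≤ 1 ∧
    r = ∫ x in ω, f x * α x }

/-- `H^{-2}(ω)` norm of `det H + curlᵀ curl S`. -/
def detPlusCtcHneg2 (ω : Set R2) (H S : R2 → M2) : ℝ :=
  sSup { r | ∃ α : R2 → ℝ, IsTest ω α ∧ hessNormSq ω α ≤ 1 ∧
    r = (∫ x in ω, (H x).det * α x) + ∫ x in ω, frob (S x) (cof2 (hessC α x)) }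

def linftyNorm (ω : Set R2) (F : R2 → M2) : ℝ := (eLpNorm F ⊤ (μr ω)).toReal

def HasLipschitzBoundary (ω : Set R2) : Prop :=
  ∀ x ∈ frontier ω, ∃ r > (0:ℝ), ∃ A : R2 ≃ᵃⁱ[ℝ] R2, ∃ f : ℝ → ℝ, ∃ K,
    LipschitzWith K f ∧
    ω ∩ Metric.ball x r = (A '' {p : R2 | p.2 < f p.1}) ∩ Metric.ball x r

def NiceDomain (ω : Set R2) : Prop :=
  IsOpen ω ∧ Bornology.IsBounded ω ∧ SimplyConnectedSpace ω ∧ HasLipschitzBoundary ω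

def distToHess (ω : Set R2) (F : R2 → M2) : ℝ :=
  sInf { t | ∃ v g H, MemW22 ω v g H ∧ t = l2norm ω (fun x => F x - H x) }

def distToGrad (ω : Set R2) (F : R2 → M2) : ℝ :=
  sInf { t | ∃ w G, MemW12v ω w G ∧ t = l2norm ω (fun x => F x - G x) }

def distToSymGrad (ω : Set R2) (F : R2 → M2) : ℝ :=
  sInf { t | ∃ w G, MemW12v ω w G ∧ t = l2norm ω (fun x => F x - sym2 (G x)) }


def curlC (s : R2 → R2) (x : R2) : ℝ :=
  pd 0 (fun y => (s y).2) x - pd 1 (fun y => (s y).1) x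

section Helpers

lemma pd_congr_nhds {f g : R2 → ℝ} {x : R2} (h : f =ᶠ[nhds x] g) (i : Fin 2) :
    pd i f x = pd i g x := by
  unfold pd; rw [h.fderiv_eq]

lemma pd_add {f g : R2 → ℝ} {x : R2} (hf : DifferentiableAt ℝ f x)
    (hg : DifferentiableAt ℝ g x) (i : Fin 2) :
    pd i (fun y => f y + g y) x = pd i f x + pd i g x := by
  unfold pd; rw [fderiv_fun_add hf hg]; simp

lemma pd_sub {f g : R2 → ℝ} {x : R2} (hf : DifferentiableAt ℝ f x)
    (hg : DifferentiableAt ℝ g x) (i : Fin 2) :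
    pd i (fun y => f y - g y) x = pd i f x - pd i g x := by
  unfold pd; rw [fderiv_fun_sub hf hg]; simp

lemma pd_mul {f g : R2 → ℝ} {x : R2} (hf : DifferentiableAt ℝ f x)
    (hg : DifferentiableAt ℝ g x) (i : Fin 2) :
    pd i (fun y => f y * g y) x = pd i f x * g x + f x * pd i g x := by
  unfold pd; rw [fderiv_fun_mul hf hg]; simp; ring

lemma pd_differentiableAt {f : R2 → ℝ} {ω : Set R2} (hω : IsOpen ω)
    (hf : ContDiffOn ℝ 2 f ω) (j : Fin 2) {x : R2} (hx : x ∈ ω) :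
    DifferentiableAt ℝ (pd j f) x := by
  have h1 : ContDiffOn ℝ 1 (fderiv ℝ f) ω := hf.fderiv_of_isOpen hω (by norm_num)
  have h2 : DifferentiableAt ℝ (fderiv ℝ f) x :=
    ((h1.differentiableOn one_ne_zero).differentiableAt (hω.mem_nhds hx))
  exact h2.clm_apply (differentiableAt_const _)

lemma pd_comm {f : R2 → ℝ} {ω : Set R2} (hω : IsOpen ω)
    (hf : ContDiffOn ℝ 2 f ω) {x : R2} (hx : x ∈ ω) (i j : Fin 2) :
    pd i (pd j f) x = pd j (pd i f) x := by
  have hct : ContDiffAt ℝ 2 f x := hf.contDiffAt (hω.mem_nhds hx)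
  have hsym : IsSymmSndFDerivAt ℝ f x := hct.isSymmSndFDerivAt (by norm_num)
  have h1 : ContDiffOn ℝ 1 (fderiv ℝ f) ω := hf.fderiv_of_isOpen hω (by norm_num)
  have hdf : DifferentiableAt ℝ (fderiv ℝ f) x :=
    ((h1.differentiableOn one_ne_zero).differentiableAt (hω.mem_nhds hx))
  unfold pd
  rw [fderiv_clm_apply hdf (differentiableAt_const _),
      fderiv_clm_apply hdf (differentiableAt_const _)]
  simp [hsym.eq]

end Helpers

/-- Pointwise identity behind Theorem 1.8 (i):
`det(B − 2 sym ∇s) + ½ curlᵀcurl(s⊗s)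
  = 3 det ∇s − ⟨∇(curl s), s^⊥⟩ − 2⟨cof B : ∇s⟩ + det B`. -/
theorem stmt_19 (ω : Set R2) (hω : IsOpen ω) (s : R2 → R2) (hs : ContDiffOn ℝ 2 s ω)
    (B : R2 → M2) (hB : ∀ i j : Fin 2, ContDiffOn ℝ 1 (fun x => B x i j) ω)
    (hBsym : ∀ x, (B x).IsSymm) :
    ∀ x ∈ ω,
      (B x - (2:ℝ) • sym2 (jacC s x)).det
        + (1/2) * (pd 0 (pd 0 (fun y => (s y).2 * (s y).2)) x
            - 2 * pd 0 (pd 1 (fun y => (s y).1 * (s y).2)) x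
            + pd 1 (pd 1 (fun y => (s y).1 * (s y).1)) x)
      = 3 * (jacC s x).det
        - (pd 0 (curlC s) x * (-(s x).2) + pd 1 (curlC s) x * (s x).1)
        - 2 * frob (cof2 (B x)) (jacC s x) + (B x).det := by
  intro x hx
  set a : R2 → ℝ := fun y => (s y).1 with ha_def
  set b : R2 → ℝ := fun y => (s y).2 with hb_def
  have ha2 : ContDiffOn ℝ 2 a ω := (contDiff_fst.comp_contDiffOn hs)
  have hb2 : ContDiffOn ℝ 2 b ω := (contDiff_snd.comp_contDiffOn hs)
  have hadiff : ∀ y ∈ ω, DifferentiableAt ℝ a y := fun y hy =>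
    (ha2.differentiableOn two_ne_zero).differentiableAt (hω.mem_nhds hy)
  have hbdiff : ∀ y ∈ ω, DifferentiableAt ℝ b y := fun y hy =>
    (hb2.differentiableOn two_ne_zero).differentiableAt (hω.mem_nhds hy)
  have hmem : ∀ᶠ y in nhds x, y ∈ ω := hω.eventually_mem hx
  -- T1 : pd 0 (pd 0 (b*b))
  have e1 : pd 0 (fun y => b y * b y) =ᶠ[nhds x]
      (fun y => pd 0 b y * b y + b y * pd 0 b y) := by
    filter_upwards [hmem] with y hy
    exact pd_mul (hbdiff y hy) (hbdiff y hy) 0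
  have T1 : pd 0 (pd 0 (fun y => b y * b y)) x
      = pd 0 (pd 0 b) x * b x + pd 0 b x * pd 0 b x
        + (pd 0 b x * pd 0 b x + b x * pd 0 (pd 0 b) x) := by
    rw [pd_congr_nhds e1 0,
      pd_add ((pd_differentiableAt hω hb2 0 hx).fun_mul (hbdiff x hx))
        ((hbdiff x hx).fun_mul (pd_differentiableAt hω hb2 0 hx)) 0,
      pd_mul (pd_differentiableAt hω hb2 0 hx) (hbdiff x hx) 0,
      pd_mul (hbdiff x hx) (pd_differentiableAt hω hb2 0 hx) 0]
  -- T2 : pd 0 (pd 1 (a*b))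
  have e2 : pd 1 (fun y => a y * b y) =ᶠ[nhds x]
      (fun y => pd 1 a y * b y + a y * pd 1 b y) := by
    filter_upwards [hmem] with y hy
    exact pd_mul (hadiff y hy) (hbdiff y hy) 1
  have T2 : pd 0 (pd 1 (fun y => a y * b y)) x
      = pd 0 (pd 1 a) x * b x + pd 1 a x * pd 0 b x
        + (pd 0 a x * pd 1 b x + a x * pd 0 (pd 1 b) x) := by
    rw [pd_congr_nhds e2 0,
      pd_add ((pd_differentiableAt hω ha2 1 hx).fun_mul (hbdiff x hx))
        ((hadiff x hx).fun_mul (pd_differentiableAt hω hb2 1 hx)) 0,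
      pd_mul (pd_differentiableAt hω ha2 1 hx) (hbdiff x hx) 0,
      pd_mul (hadiff x hx) (pd_differentiableAt hω hb2 1 hx) 0]
  -- T3 : pd 1 (pd 1 (a*a))
  have e3 : pd 1 (fun y => a y * a y) =ᶠ[nhds x]
      (fun y => pd 1 a y * a y + a y * pd 1 a y) := by
    filter_upwards [hmem] with y hy
    exact pd_mul (hadiff y hy) (hadiff y hy) 1
  have T3 : pd 1 (pd 1 (fun y => a y * a y)) x
      = pd 1 (pd 1 a) x * a x + pd 1 a x * pd 1 a x
        + (pd 1 a x * pd 1 a x + a x * pd 1 (pd 1 a) x) := by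
    rw [pd_congr_nhds e3 1,
      pd_add ((pd_differentiableAt hω ha2 1 hx).fun_mul (hadiff x hx))
        ((hadiff x hx).fun_mul (pd_differentiableAt hω ha2 1 hx)) 1,
      pd_mul (pd_differentiableAt hω ha2 1 hx) (hadiff x hx) 1,
      pd_mul (hadiff x hx) (pd_differentiableAt hω ha2 1 hx) 1]
  -- curl terms
  have hcurl : curlC s = fun y => pd 0 b y - pd 1 a y := rfl
  have C0 : pd 0 (curlC s) x = pd 0 (pd 0 b) x - pd 0 (pd 1 a) x := by
    rw [hcurl, pd_sub (pd_differentiableAt hω hb2 0 hx) (pd_differentiableAt hω ha2 1 hx) 0]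
  have C1 : pd 1 (curlC s) x = pd 1 (pd 0 b) x - pd 1 (pd 1 a) x := by
    rw [hcurl, pd_sub (pd_differentiableAt hω hb2 0 hx) (pd_differentiableAt hω ha2 1 hx) 1]
  -- mixed partial symmetry for b
  have hSb : pd 0 (pd 1 b) x = pd 1 (pd 0 b) x := pd_comm hω hb2 hx 0 1
  have hq : B x 1 0 = B x 0 1 := (hBsym x).apply 0 1
  have hsx1 : (s x).1 = a x := rfl
  have hsx2 : (s x).2 = b x := rfl
  simp only [ha_def, hb_def] at T1 T2 T3 ⊢
  rw [T1, T2, T3, C0, C1, hsx1, hsx2]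
  simp only [ha_def, hb_def]
  simp only [Matrix.det_fin_two, sym2, jacC, cof2, frob, Fin.sum_univ_two,
    Matrix.sub_apply, Matrix.smul_apply, Matrix.add_apply, Matrix.transpose_apply,
    Matrix.cons_val', Matrix.cons_val_zero, Matrix.cons_val_one, Matrix.head_cons,
    Matrix.empty_val', Matrix.cons_val_fin_one, Matrix.head_fin_const, smul_eq_mul]
  rw [hq] at *
  simp only [Matrix.of_apply, Matrix.cons_val', Matrix.cons_val_zero, Matrix.cons_val_one,
    Matrix.head_cons, Matrix.head_fin_const, Matrix.empty_val', Matrix.cons_val_fin_one]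
  simp only [ha_def, hb_def] at hSb ⊢
  rw [hSb]
  ring


end
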